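/- Let n = 2m with m ≥ 2 even, λ = (m, m), and let c, d ∈ ℂ with d ≠ 0. Let W = ⟨c·e_1 + d·f_1⟩ ⊆ V_λ. Then W is isotropic for β_λ, W^⊥ = ⟨e_1, …, e_{m−1}, f_1, …, f_{m−1}, c·e_m + d·f_m⟩, and x_λ(W) ⊆ W, x_λ(W^⊥) ⊆ W^⊥. Moreover, with ν = (m−1, m−1), the linear map Q : W^⊥/W → V_ν determined by Q(((c/d)·e_{j+1} + f_{j+1}) + W) = f_j and Q(e_j + W) = e_j for 1 ≤ j ≤ m−1 is a linear isomorphism satisfying β̄_λ(u, v) = β_ν(Q u, Q v) for all u, v ∈ W^⊥/W, and Q ∘ x̄_λ = x_ν ∘ Q. -/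

import Mathlib

open Complex Submodule

noncomputable section

/-- `V p q` is the vector space `ℂ^(p+q)` with coordinates indexed by `Fin p ⊕ Fin q`,
corresponding to the basis `e_1, …, e_p, f_1, …, f_q` of `V_λ` for `λ = (p, q)`. -/
abbrev V (p q : ℕ) := (Fin p ⊕ Fin q) → ℂ

/-- The basis vector `e_i` (1-based index `i`; it is `0` if `i` is out of range). -/
def ee (p q : ℕ) (i : ℕ) : V p q :=
  Sum.elim (fun j => if (j : ℕ) + 1 = i then 1 else 0) (fun _ => 0)

/-- The basis vector `f_j` (1-based index `j`; it is `0` if `j` is out of range). -/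
def ff (p q : ℕ) (i : ℕ) : V p q :=
  Sum.elim (fun _ => 0) (fun j => if (j : ℕ) + 1 = i then 1 else 0)

/-- The nilpotent endomorphism `x_λ` with `x(e_i) = e_{i-1}`, `x(f_j) = f_{j-1}`. -/
def xmap (p q : ℕ) : V p q →ₗ[ℂ] V p q where
  toFun v := Sum.elim
    (fun j => if h : (j : ℕ) + 1 < p then v (Sum.inl ⟨(j : ℕ) + 1, h⟩) else 0)
    (fun j => if h : (j : ℕ) + 1 < q then v (Sum.inr ⟨(j : ℕ) + 1, h⟩) else 0)
  map_add' u v := by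
    funext s; cases s <;> dsimp <;> split <;> simp
  map_smul' c v := by
    funext s; cases s <;> dsimp <;> split <;> simp

/-- The Gram matrix of the bilinear form `β_λ` for `λ = (p, q)` (0-based indices). -/
def gram (p q : ℕ) : Matrix (Fin p ⊕ Fin q) (Fin p ⊕ Fin q) ℂ :=
  fun s t =>
    match s, t with
    | Sum.inl i, Sum.inl j =>
        if p = q then 0 else if (i : ℕ) + (j : ℕ) + 2 = p + 1 then (-1 : ℂ) ^ (i : ℕ) else 0
    | Sum.inl i, Sum.inr j =>
        if p = q then (if (i : ℕ) + (j : ℕ) + 2 = p + 1 then (-1 : ℂ) ^ (i : ℕ) else 0) else 0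
    | Sum.inr i, Sum.inl j =>
        if p = q then (if (j : ℕ) + (i : ℕ) + 2 = p + 1 then (-1 : ℂ) ^ (j : ℕ) else 0) else 0
    | Sum.inr i, Sum.inr j =>
        if p = q then 0 else if (i : ℕ) + (j : ℕ) + 2 = q + 1 then (-1 : ℂ) ^ (i : ℕ) else 0

/-- The symmetric bilinear form `β_λ` for `λ = (p, q)`. -/
def beta (p q : ℕ) : LinearMap.BilinForm ℂ (V p q) :=
  Matrix.toLinearMap₂' ℂ (gram p q)

/-- Orthogonal complement with respect to `β_λ`. -/
def orth (p q : ℕ) (W : Submodule ℂ (V p q)) : Submodule ℂ (V p q) :=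
  (beta p q).orthogonal W

/-- The subspace `⟨e_1, …, e_r, f_1, …, f_s⟩`. -/
def EF (p q r s : ℕ) : Submodule ℂ (V p q) :=
  Submodule.span ℂ
    ({v | ∃ i, 1 ≤ i ∧ i ≤ r ∧ v = ee p q i} ∪ {v | ∃ j, 1 ≤ j ∧ j ≤ s ∧ v = ff p q j})

/-- A complete isotropic flag in `(V_λ, β_λ)`, encoded as a function `ℕ → Submodule`
which is `⊤` from degree `p+q` on. -/
def IsFlag (p q : ℕ) (F : ℕ → Submodule ℂ (V p q)) : Prop :=
  (∀ i ≤ p + q, Module.finrank ℂ (F i) = i) ∧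
  (∀ i < p + q, F i ≤ F (i + 1)) ∧
  (∀ i ≤ p + q, F (p + q - i) = orth p q (F i)) ∧
  (∀ i, p + q ≤ i → F i = ⊤)

/-- The flag `F` lies in the Springer fiber of `x_λ`. -/
def InSpringer (p q : ℕ) (F : ℕ → Submodule ℂ (V p q)) : Prop :=
  ∀ i < p + q, (F (i + 1)).map (xmap p q) ≤ F i
/-- The coordinate projection `V_(p,q) → V_(p',q')`, sending `e_i ↦ e_i` (resp. `f_j ↦ f_j`)
when the index is in range and to `0` otherwise. -/
def Pmap (p q p' q' : ℕ) : V p q →ₗ[ℂ] V p' q' where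
  toFun v := Sum.elim
    (fun i => if h : (i : ℕ) < p then v (Sum.inl ⟨(i : ℕ), h⟩) else 0)
    (fun j => if h : (j : ℕ) < q then v (Sum.inr ⟨(j : ℕ), h⟩) else 0)
  map_add' u v := by
    funext s; cases s <;> dsimp <;> split <;> simp
  map_smul' c v := by
    funext s; cases s <;> dsimp <;> split <;> simp

/-- The flag in `V_(p',q')` induced, via a linear map `Q` defined on `W^⊥` and killing `W`
(representing an isomorphism `W^⊥/W ≅ V_(p',q')`), by the part `F_l ⊆ F_{l+1} ⊆ …` of a
flag `F` in `V_(p,q)`:  `F''_i = Q(F_{l+i}/W)` for `i ≤ (p'+q')/2`, and the remaining spaces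
are determined by taking orthogonal complements with respect to `β_(p',q')`. -/
def Qflag (p q p' q' l : ℕ) (W : Submodule ℂ (V p q)) (Q : V p q →ₗ[ℂ] V p' q')
    (F : ℕ → Submodule ℂ (V p q)) : ℕ → Submodule ℂ (V p' q') :=
  fun i =>
    if i ≤ (p' + q') / 2 then (F (l + i) ⊓ orth p q W).map Q
    else if i ≤ p' + q' then orth p' q' ((F (l + (p' + q' - i)) ⊓ orth p q W).map Q)
    else ⊤

/-- The flag in `V_(2t,2t)` obtained from a flag `F` in `V_(p,q)` by applying the projection
`Pmap` to `F_0, …, F_{2t}` and completing by orthogonal complements. -/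
def Pflag (p q t : ℕ) (F : ℕ → Submodule ℂ (V p q)) : ℕ → Submodule ℂ (V (2*t) (2*t)) :=
  fun i =>
    if i ≤ 2*t then (F i).map (Pmap p q (2*t) (2*t))
    else if i ≤ 4*t then orth (2*t) (2*t) ((F (4*t - i)).map (Pmap p q (2*t) (2*t)))
    else ⊤

/-- The conditions determining the quotient isomorphism `Q^II_2 : W^⊥/W → V_ν`
(`W = ⟨c·e_1 + d·f_1⟩`, `d ≠ 0`, `λ = (m,m)`, `ν = (m-1,m-1)`):
`Q(((c/d)·e_{j+1} + f_{j+1}) + W) = f_j` and `Q(e_j + W) = e_j` for `1 ≤ j ≤ m-1`,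
encoded on an ambient linear map killing `W`. -/
def QCondII2 (m : ℕ) (c d : ℂ) (Q : V m m →ₗ[ℂ] V (m-1) (m-1)) : Prop :=
  (∀ j, 1 ≤ j → j ≤ m - 1 →
    Q ((c/d) • ee m m (j+1) + ff m m (j+1)) = ff (m-1) (m-1) j) ∧
  (∀ j, 1 ≤ j → j ≤ m - 1 → Q (ee m m j) = ee (m-1) (m-1) j) ∧
  (∀ u ∈ Submodule.span ℂ {c • ee m m 1 + d • ff m m 1}, Q u = 0)

def cL (p q : ℕ) (u : V p q) (i : ℕ) : ℂ := if h : i < p then u (Sum.inl ⟨i,h⟩) else 0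
def cR (p q : ℕ) (u : V p q) (i : ℕ) : ℂ := if h : i < q then u (Sum.inr ⟨i,h⟩) else 0

lemma beta_formula (n : ℕ) (u v : V n n) :
    beta n n u v = ∑ i ∈ Finset.range n, ((-1:ℂ)^i *
      (cL n n u i * cR n n v (n-1-i) + cR n n u (n-1-i) * cL n n v i)) := by
  rw [beta, Matrix.toLinearMap₂'_apply]
  simp only [smul_eq_mul]
  rw [Fintype.sum_sum_type]
  have h1 : ∀ i : Fin n, (∑ t : Fin n ⊕ Fin n, u (Sum.inl i) * (v t * gram n n (Sum.inl i) t))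
      = (fun k : ℕ => (-1:ℂ)^k * (cL n n u k * cR n n v (n-1-k))) (i : ℕ) := by
    intro i
    have hin := i.isLt
    rw [Fintype.sum_sum_type]
    have hz : (∑ j : Fin n, u (Sum.inl i) * (v (Sum.inl j) * gram n n (Sum.inl i) (Sum.inl j))) = 0 := by
      apply Finset.sum_eq_zero; intro j _; simp [gram]
    rw [hz, zero_add]
    rw [Finset.sum_eq_single (⟨n-1-i, by omega⟩ : Fin n)]
    · have hc : (i:ℕ) + (n-1-(i:ℕ)) + 2 = n + 1 := by omega
      simp only [gram, if_pos rfl, hc, if_pos, cL, cR, dif_pos hin, dif_pos (show n-1-(i:ℕ) < n by omega), Fin.eta]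
      ring
    · intro j _ hj
      have hjn : (j:ℕ) ≠ n-1-(i:ℕ) := fun h => hj (Fin.ext h)
      have : (i:ℕ) + (j:ℕ) + 2 ≠ n + 1 := by have := j.isLt; omega
      simp [gram, this]
    · intro h; exact absurd (Finset.mem_univ _) h
  have h2 : ∀ j : Fin n, (∑ t : Fin n ⊕ Fin n, u (Sum.inr j) * (v t * gram n n (Sum.inr j) t))
      = (fun k : ℕ => (-1:ℂ)^(n-1-k) * (cR n n u k * cL n n v (n-1-k))) (j : ℕ) := by
    intro j
    have hjn := j.isLt
    rw [Fintype.sum_sum_type]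
    have hz : (∑ i : Fin n, u (Sum.inr j) * (v (Sum.inr i) * gram n n (Sum.inr j) (Sum.inr i))) = 0 := by
      apply Finset.sum_eq_zero; intro i _; simp [gram]
    rw [hz, add_zero]
    rw [Finset.sum_eq_single (⟨n-1-j, by omega⟩ : Fin n)]
    · have hc : (n-1-(j:ℕ)) + (j:ℕ) + 2 = n + 1 := by omega
      simp only [gram, if_pos rfl, hc, if_pos, cL, cR, dif_pos hjn, dif_pos (show n-1-(j:ℕ) < n by omega), Fin.eta]
      ring
    · intro i _ hi
      have hin : (i:ℕ) ≠ n-1-(j:ℕ) := fun h => hi (Fin.ext h)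
      have : (i:ℕ) + (j:ℕ) + 2 ≠ n + 1 := by have := i.isLt; omega
      simp [gram, this]
    · intro h; exact absurd (Finset.mem_univ _) h
  rw [Finset.sum_congr rfl (fun i _ => h1 i), Finset.sum_congr rfl (fun j _ => h2 j)]
  rw [Fin.sum_univ_eq_sum_range (fun k : ℕ => (-1:ℂ)^k * (cL n n u k * cR n n v (n-1-k))) n,
    Fin.sum_univ_eq_sum_range (fun k : ℕ => (-1:ℂ)^(n-1-k) * (cR n n u k * cL n n v (n-1-k))) n]
  have h3 : (∑ k ∈ Finset.range n, (-1:ℂ)^(n-1-k) * (cR n n u k * cL n n v (n-1-k)))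
      = ∑ k ∈ Finset.range n, (-1:ℂ)^k * (cR n n u (n-1-k) * cL n n v k) := by
    rw [← Finset.sum_range_reflect (fun k => (-1:ℂ)^k * (cR n n u (n-1-k) * cL n n v k)) n]
    apply Finset.sum_congr rfl
    intro k hk
    have : n - 1 - (n - 1 - k) = k := by have := Finset.mem_range.1 hk; omega
    rw [this]
  rw [h3, ← Finset.sum_add_distrib]
  apply Finset.sum_congr rfl
  intro k _; ring



lemma cL_add (p q : ℕ) (u v : V p q) (k : ℕ) : cL p q (u + v) k = cL p q u k + cL p q v k := by
  unfold cL; split <;> simp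
lemma cR_add (p q : ℕ) (u v : V p q) (k : ℕ) : cR p q (u + v) k = cR p q u k + cR p q v k := by
  unfold cR; split <;> simp
lemma cL_smul (p q : ℕ) (t : ℂ) (u : V p q) (k : ℕ) : cL p q (t • u) k = t * cL p q u k := by
  unfold cL; split <;> simp
lemma cR_smul (p q : ℕ) (t : ℂ) (u : V p q) (k : ℕ) : cR p q (t • u) k = t * cR p q u k := by
  unfold cR; split <;> simp
lemma cL_ee (p q i k : ℕ) : cL p q (ee p q i) k = if k + 1 = i ∧ k < p then 1 else 0 := by
  unfold cL ee; by_cases h : k < p <;> simp [h]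
lemma cR_ee (p q i k : ℕ) : cR p q (ee p q i) k = 0 := by
  unfold cR ee; split <;> simp
lemma cL_ff (p q i k : ℕ) : cL p q (ff p q i) k = 0 := by
  unfold cL ff; split <;> simp
lemma cR_ff (p q i k : ℕ) : cR p q (ff p q i) k = if k + 1 = i ∧ k < q then 1 else 0 := by
  unfold cR ff; by_cases h : k < q <;> simp [h]

lemma neg_one_pow_pred (n : ℕ) (hn : 2 ≤ n) (hne : Even n) : (-1:ℂ)^(n-1) = -1 :=
  Odd.neg_one_pow (by rcases hne with ⟨t, rfl⟩; exact ⟨t-1, by omega⟩)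

lemma beta_w_left (n : ℕ) (hn : 2 ≤ n) (hne : Even n) (c d : ℂ) (u : V n n) :
    beta n n (c • ee n n 1 + d • ff n n 1) u
      = c * cR n n u (n-1) - d * cL n n u (n-1) := by
  rw [beta_formula]
  have hcong : ∀ i ∈ Finset.range n,
      (-1:ℂ)^i * (cL n n (c • ee n n 1 + d • ff n n 1) i * cR n n u (n-1-i)
        + cR n n (c • ee n n 1 + d • ff n n 1) (n-1-i) * cL n n u i)
      = (if i = 0 then c * cR n n u (n-1) else 0)
        + (if i = n-1 then -(d * cL n n u (n-1)) else 0) := by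
    intro i hi
    have hi' := Finset.mem_range.1 hi
    simp only [cL_add, cR_add, cL_smul, cR_smul, cL_ee, cR_ee, cL_ff, cR_ff,
      mul_zero, zero_add, add_zero]
    by_cases h0 : i = 0
    · subst h0
      have h1 : (0:ℕ) + 1 = 1 ∧ 0 < n := ⟨rfl, by omega⟩
      have h2 : ¬((n-1-0) + 1 = 1 ∧ n-1-0 < n) := by omega
      have h3 : ¬((0:ℕ) = n-1) := by omega
      have h4 : ¬(n - 1 = 0) := by omega
      simp [h1, h2, h3, h4]
    · by_cases hl : i = n-1
      · subst hl
        have h1 : ¬((n-1) + 1 = 1 ∧ n-1 < n) := by omega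
        have h2 : (n-1-(n-1)) + 1 = 1 ∧ n-1-(n-1) < n := by omega
        have h3 : n-1-(n-1) = 0 := by omega
        have h4 : n ≠ 0 := by omega
        have h5 : 0 < n := by omega
        simp [h1, h2, h3, h0, h4, h5, neg_one_pow_pred n hn hne]
      · have h1 : ¬(i + 1 = 1 ∧ i < n) := by omega
        have h2 : ¬((n-1-i) + 1 = 1 ∧ n-1-i < n) := by omega
        have h3 : ¬(n-1-i = 0) := by omega
        simp [h1, h2, h0, hl, h3]
  rw [Finset.sum_congr rfl hcong, Finset.sum_add_distrib,
    Finset.sum_ite_eq' (Finset.range n) 0 (fun _ => c * cR n n u (n-1)),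
    Finset.sum_ite_eq' (Finset.range n) (n-1) (fun _ => -(d * cL n n u (n-1)))]
  have m0 : (0:ℕ) ∈ Finset.range n := Finset.mem_range.2 (by omega)
  have m1 : n-1 ∈ Finset.range n := Finset.mem_range.2 (by omega)
  rw [if_pos m0, if_pos m1]; ring

lemma mem_orth_iff (n : ℕ) (hn : 2 ≤ n) (hne : Even n) (c d : ℂ) (u : V n n) :
    u ∈ orth n n (Submodule.span ℂ {c • ee n n 1 + d • ff n n 1})
      ↔ c * cR n n u (n-1) = d * cL n n u (n-1) := by
  constructor
  · intro h
    have h2 := h _ (Submodule.mem_span_singleton_self _)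
    change beta n n _ u = 0 at h2
    rw [beta_w_left n hn hne] at h2
    linear_combination h2
  · intro h w hw
    rw [Submodule.mem_span_singleton] at hw
    obtain ⟨t, rfl⟩ := hw
    show beta n n _ u = 0
    rw [map_smul, LinearMap.smul_apply, beta_w_left n hn hne, h]
    simp

lemma cL_oor (p q : ℕ) (u : V p q) (k : ℕ) (h : ¬ k < p) : cL p q u k = 0 := dif_neg h
lemma cR_oor (p q : ℕ) (u : V p q) (k : ℕ) (h : ¬ k < q) : cR p q u k = 0 := dif_neg h
lemma cL_sub (p q : ℕ) (u v : V p q) (k : ℕ) : cL p q (u - v) k = cL p q u k - cL p q v k := by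
  unfold cL; split <;> simp
lemma cR_sub (p q : ℕ) (u v : V p q) (k : ℕ) : cR p q (u - v) k = cR p q u k - cR p q v k := by
  unfold cR; split <;> simp

lemma Vext (p q : ℕ) (u v : V p q) (hL : ∀ k, cL p q u k = cL p q v k)
    (hR : ∀ k, cR p q u k = cR p q v k) : u = v := by
  funext s
  cases s with
  | inl i => have h := hL i; unfold cL at h; rw [dif_pos i.isLt, dif_pos i.isLt] at h; simpa using h
  | inr i => have h := hR i; unfold cR at h; rw [dif_pos i.isLt, dif_pos i.isLt] at h; simpa using h

lemma single_inl (p q : ℕ) (i : Fin p) (t : ℂ) :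
    Pi.single (Sum.inl i : Fin p ⊕ Fin q) t = t • ee p q ((i:ℕ)+1) := by
  funext s
  cases s with
  | inl j =>
    by_cases h : j = i
    · subst h; simp [ee]
    · have h2 : ¬((j:ℕ) + 1 = (i:ℕ) + 1) := fun hh => h (Fin.ext (by omega))
      rw [Pi.single_apply, if_neg (by simp [h])]
      simp [ee, h2, show ¬((j:ℕ) = (i:ℕ)) from fun hh => h (Fin.ext hh)]
  | inr j => simp [Pi.single_apply, ee]

lemma single_inr (p q : ℕ) (i : Fin q) (t : ℂ) :
    Pi.single (Sum.inr i : Fin p ⊕ Fin q) t = t • ff p q ((i:ℕ)+1) := by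
  funext s
  cases s with
  | inr j =>
    by_cases h : j = i
    · subst h; simp [ff]
    · have h2 : ¬((j:ℕ) + 1 = (i:ℕ) + 1) := fun hh => h (Fin.ext (by omega))
      rw [Pi.single_apply, if_neg (by simp [h])]
      simp [ff, h2, show ¬((j:ℕ) = (i:ℕ)) from fun hh => h (Fin.ext hh)]
  | inl j => simp [Pi.single_apply, ff]

lemma mem_EF (n : ℕ) (hn : 2 ≤ n) (v : V n n) (hL : cL n n v (n-1) = 0)
    (hR : cR n n v (n-1) = 0) : v ∈ EF n n (n-1) (n-1) := by
  have hv : v = ∑ s : Fin n ⊕ Fin n, Pi.single s (v s) := (Finset.univ_sum_single v).symm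
  rw [hv]
  apply Submodule.sum_mem
  intro s _
  cases s with
  | inl i =>
    by_cases h : (i:ℕ) = n-1
    · have : v (Sum.inl i) = 0 := by
        unfold cL at hL; rw [dif_pos (by omega : n-1 < n)] at hL
        have : i = (⟨n-1, by omega⟩ : Fin n) := Fin.ext h
        rw [this]; exact hL
      rw [this, Pi.single_zero]; exact Submodule.zero_mem _
    · rw [single_inl]
      apply Submodule.smul_mem
      apply Submodule.subset_span
      exact Or.inl ⟨(i:ℕ)+1, by omega, by have := i.isLt; omega, rfl⟩
  | inr i =>
    by_cases h : (i:ℕ) = n-1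
    · have : v (Sum.inr i) = 0 := by
        unfold cR at hR; rw [dif_pos (by omega : n-1 < n)] at hR
        have : i = (⟨n-1, by omega⟩ : Fin n) := Fin.ext h
        rw [this]; exact hR
      rw [this, Pi.single_zero]; exact Submodule.zero_mem _
    · rw [single_inr]
      apply Submodule.smul_mem
      apply Submodule.subset_span
      exact Or.inr ⟨(i:ℕ)+1, by omega, by have := i.isLt; omega, rfl⟩

lemma orth_eq (n : ℕ) (hn : 2 ≤ n) (hne : Even n) (c d : ℂ) (hd : d ≠ 0) :
    orth n n (Submodule.span ℂ {c • ee n n 1 + d • ff n n 1})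
      = EF n n (n-1) (n-1) ⊔ Submodule.span ℂ {c • ee n n n + d • ff n n n} := by
  apply le_antisymm
  · intro u hu
    rw [mem_orth_iff n hn hne] at hu
    set g : V n n := c • ee n n n + d • ff n n n with hg
    set t : ℂ := cR n n u (n-1) / d with ht
    have hgL : cL n n g (n-1) = c := by
      rw [hg, cL_add, cL_smul, cL_smul, cL_ee, cL_ff, if_pos ⟨by omega, by omega⟩]; ring
    have hgR : cR n n g (n-1) = d := by
      rw [hg, cR_add, cR_smul, cR_smul, cR_ee, cR_ff, if_pos ⟨by omega, by omega⟩]; ring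
    have h1 : u - t • g ∈ EF n n (n-1) (n-1) := by
      apply mem_EF n hn
      · rw [cL_sub, cL_smul, hgL, ht]
        field_simp
        linear_combination -hu
      · rw [cR_sub, cR_smul, hgR, ht]
        field_simp
        ring
    have h2 : u = (u - t • g) + t • g := by ring
    rw [h2]
    exact Submodule.add_mem _ (Submodule.mem_sup_left h1)
      (Submodule.mem_sup_right (Submodule.smul_mem _ t (Submodule.mem_span_singleton_self _)))
  · apply sup_le
    · rw [EF, Submodule.span_le]
      rintro v (⟨i, hi1, hi2, rfl⟩ | ⟨j, hj1, hj2, rfl⟩)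
      · rw [SetLike.mem_coe, mem_orth_iff n hn hne, cL_ee, cR_ee,
          if_neg (by omega : ¬((n-1) + 1 = i ∧ n-1 < n))]
        ring
      · rw [SetLike.mem_coe, mem_orth_iff n hn hne, cL_ff, cR_ff,
          if_neg (by omega : ¬((n-1) + 1 = j ∧ n-1 < n))]
        ring
    · rw [Submodule.span_le]
      rintro v rfl
      rw [SetLike.mem_coe, mem_orth_iff n hn hne, cL_add, cL_smul, cL_smul, cL_ee, cL_ff,
        cR_add, cR_smul, cR_smul, cR_ee, cR_ff, if_pos (⟨by omega, by omega⟩ : (n-1)+1 = n ∧ n-1 < n)]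
      ring


lemma cL_xmap (p q : ℕ) (u : V p q) (k : ℕ) :
    cL p q (xmap p q u) k = if k + 1 < p then cL p q u (k+1) else 0 := by
  unfold cL
  by_cases h1 : k < p
  · rw [dif_pos h1]
    show (if h : k + 1 < p then u (Sum.inl ⟨k+1, h⟩) else 0) = _
    by_cases h2 : k + 1 < p
    · rw [dif_pos h2, if_pos h2]
    · rw [dif_neg h2, if_neg h2]
  · rw [dif_neg h1, if_neg (by omega)]
lemma cR_xmap (p q : ℕ) (u : V p q) (k : ℕ) :
    cR p q (xmap p q u) k = if k + 1 < q then cR p q u (k+1) else 0 := by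
  unfold cR
  by_cases h1 : k < q
  · rw [dif_pos h1]
    show (if h : k + 1 < q then u (Sum.inr ⟨k+1, h⟩) else 0) = _
    by_cases h2 : k + 1 < q
    · rw [dif_pos h2, if_pos h2]
    · rw [dif_neg h2, if_neg h2]
  · rw [dif_neg h1, if_neg (by omega)]

lemma xw_zero (n : ℕ) (c d : ℂ) : xmap n n (c • ee n n 1 + d • ff n n 1) = 0 := by
  apply Vext <;> intro k
  · rw [cL_xmap]
    by_cases h : k + 1 < n
    · rw [if_pos h, cL_add, cL_smul, cL_smul, cL_ee, cL_ff,
        if_neg (by omega : ¬((k+1) + 1 = 1 ∧ k+1 < n))]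
      simp [cL]
    · rw [if_neg h]; simp [cL]
  · rw [cR_xmap]
    by_cases h : k + 1 < n
    · rw [if_pos h, cR_add, cR_smul, cR_smul, cR_ee, cR_ff,
        if_neg (by omega : ¬((k+1) + 1 = 1 ∧ k+1 < n))]
      simp [cR]
    · rw [if_neg h]; simp [cR]

lemma W_le_orth (n : ℕ) (hn : 2 ≤ n) (hne : Even n) (c d : ℂ) :
    Submodule.span ℂ {c • ee n n 1 + d • ff n n 1} ≤
      orth n n (Submodule.span ℂ {c • ee n n 1 + d • ff n n 1}) := by
  rw [Submodule.span_le]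
  rintro v rfl
  rw [SetLike.mem_coe, mem_orth_iff n hn hne, cL_add, cL_smul, cL_smul, cL_ee, cL_ff,
    cR_add, cR_smul, cR_smul, cR_ee, cR_ff, if_neg (by omega : ¬((n-1) + 1 = 1 ∧ n-1 < n))]
  ring

lemma mapW_le (n : ℕ) (c d : ℂ) :
    (Submodule.span ℂ {c • ee n n 1 + d • ff n n 1}).map (xmap n n) ≤
      Submodule.span ℂ {c • ee n n 1 + d • ff n n 1} := by
  rw [Submodule.map_span, Set.image_singleton, xw_zero, Submodule.span_zero_singleton]
  exact bot_le

lemma mapOrth_le (n : ℕ) (hn : 2 ≤ n) (hne : Even n) (c d : ℂ) :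
    (orth n n (Submodule.span ℂ {c • ee n n 1 + d • ff n n 1})).map (xmap n n) ≤
      orth n n (Submodule.span ℂ {c • ee n n 1 + d • ff n n 1}) := by
  rw [Submodule.map_le_iff_le_comap]
  intro u _
  rw [Submodule.mem_comap, mem_orth_iff n hn hne, cL_xmap, cR_xmap,
    if_neg (by omega : ¬(n - 1 + 1 < n)), if_neg (by omega : ¬(n - 1 + 1 < n))]
  ring

def Q0 (m : ℕ) (c d : ℂ) : V m m →ₗ[ℂ] V (m-1) (m-1) where
  toFun v := Sum.elim
    (fun i => v (Sum.inl ⟨(i:ℕ), Nat.lt_of_lt_of_le i.isLt (Nat.sub_le m 1)⟩)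
      - (c/d) * v (Sum.inr ⟨(i:ℕ), Nat.lt_of_lt_of_le i.isLt (Nat.sub_le m 1)⟩))
    (fun j => v (Sum.inr ⟨(j:ℕ)+1, Nat.add_lt_of_lt_sub j.isLt⟩))
  map_add' u v := by
    funext s; cases s <;> dsimp <;> ring
  map_smul' t v := by
    funext s; cases s <;> dsimp <;> ring

lemma cL_Q0 (m : ℕ) (c d : ℂ) (v : V m m) (k : ℕ) (hk : k < m - 1) :
    cL (m-1) (m-1) (Q0 m c d v) k = cL m m v k - (c/d) * cR m m v k := by
  have hk' : k < m := by omega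
  unfold cL cR
  rw [dif_pos hk, dif_pos hk', dif_pos hk']
  rfl

lemma cR_Q0 (m : ℕ) (c d : ℂ) (v : V m m) (k : ℕ) (hk : k < m - 1) :
    cR (m-1) (m-1) (Q0 m c d v) k = cR m m v (k+1) := by
  have hk' : k + 1 < m := by omega
  unfold cR
  rw [dif_pos hk, dif_pos hk']
  rfl


lemma Q0_cond (m : ℕ) (hm : 2 ≤ m) (c d : ℂ) (hd : d ≠ 0) : QCondII2 m c d (Q0 m c d) := by
  refine ⟨?_, ?_, ?_⟩
  · intro j hj1 hj2
    apply Vext <;> intro k <;> by_cases hk : k < m - 1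
    · rw [cL_Q0 _ _ _ _ _ hk, cL_add, cL_smul, cL_ee, cL_ff, cR_add, cR_smul, cR_ee, cR_ff, cL_ff]
      ring
    · rw [cL_oor _ _ _ _ hk, cL_ff]
    · rw [cR_Q0 _ _ _ _ _ hk, cR_add, cR_smul, cR_ee, cR_ff, cR_ff]
      by_cases h : k + 1 = j
      · rw [if_pos ⟨by omega, by omega⟩, if_pos ⟨by omega, hk⟩]; ring
      · rw [if_neg (by omega), if_neg (by omega)]; ring
    · rw [cR_oor _ _ _ _ hk, cR_ff, if_neg (by omega)]
  · intro j hj1 hj2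
    apply Vext <;> intro k <;> by_cases hk : k < m - 1
    · rw [cL_Q0 _ _ _ _ _ hk, cL_ee, cL_ee, cR_ee]
      by_cases h : k + 1 = j
      · rw [if_pos ⟨h, by omega⟩, if_pos ⟨h, hk⟩]; ring
      · rw [if_neg (by omega), if_neg (by omega)]; ring
    · rw [cL_oor _ _ _ _ hk, cL_ee, if_neg (by omega)]
    · rw [cR_Q0 _ _ _ _ _ hk, cR_ee, cR_ee]
    · rw [cR_oor _ _ _ _ hk, cR_ee]
  · intro u hu
    rw [Submodule.mem_span_singleton] at hu
    obtain ⟨t, rfl⟩ := hu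
    rw [map_smul]
    have h0 : Q0 m c d (c • ee m m 1 + d • ff m m 1) = 0 := by
      apply Vext <;> intro k <;> by_cases hk : k < m - 1
      · rw [cL_Q0 _ _ _ _ _ hk, cL_add, cL_smul, cL_smul, cL_ee, cL_ff,
          cR_add, cR_smul, cR_smul, cR_ee, cR_ff]
        by_cases h : k = 0
        · rw [if_pos (⟨by omega, by omega⟩ : k + 1 = 1 ∧ k < m)]
          simp [cL]
          field_simp
          ring
        · rw [if_neg (by omega : ¬(k + 1 = 1 ∧ k < m))]; simp [cL]
      · rw [cL_oor _ _ _ _ hk]; simp [cL]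
      · rw [cR_Q0 _ _ _ _ _ hk, cR_add, cR_smul, cR_smul, cR_ee, cR_ff,
          if_neg (by omega : ¬((k+1) + 1 = 1 ∧ k+1 < m))]
        simp [cR]
      · rw [cR_oor _ _ _ _ hk]; simp [cR]
    rw [h0, smul_zero]

lemma Q_ff1 (m : ℕ) (hm : 2 ≤ m) (c d : ℂ) (hd : d ≠ 0)
    (Q : V m m →ₗ[ℂ] V (m-1) (m-1)) (hQ : QCondII2 m c d Q) :
    Q (ff m m 1) = d⁻¹ • ((0 : V (m-1) (m-1)) - c • ee (m-1) (m-1) 1) := by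
  have e1 : ff m m 1 = d⁻¹ • ((c • ee m m 1 + d • ff m m 1) - c • ee m m 1) := by
    rw [add_sub_cancel_left, smul_smul, inv_mul_cancel₀ hd, one_smul]
  rw [e1, map_smul, map_sub, map_smul, hQ.2.2 _ (Submodule.mem_span_singleton_self _),
    hQ.2.1 1 le_rfl (by omega)]

lemma Q_ffj (m : ℕ) (hm : 2 ≤ m) (c d : ℂ) (hd : d ≠ 0)
    (Q : V m m →ₗ[ℂ] V (m-1) (m-1)) (hQ : QCondII2 m c d Q) (j : ℕ)
    (hj1 : 2 ≤ j) (hj2 : j ≤ m - 1) :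
    Q (ff m m j) = ff (m-1) (m-1) (j-1) - (c/d) • ee (m-1) (m-1) j := by
  have e2 : ff m m j = ((c/d) • ee m m j + ff m m j) - (c/d) • ee m m j := by abel
  have hj : j - 1 + 1 = j := by omega
  have h1 := hQ.1 (j-1) (by omega) (by omega)
  rw [hj] at h1
  rw [e2, map_sub, map_smul, h1, hQ.2.1 j (by omega) hj2]

lemma Q_g (m : ℕ) (hm : 2 ≤ m) (c d : ℂ) (hd : d ≠ 0)
    (Q : V m m →ₗ[ℂ] V (m-1) (m-1)) (hQ : QCondII2 m c d Q) :
    Q (c • ee m m m + d • ff m m m) = d • ff (m-1) (m-1) (m-1) := by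
  have e3 : c • ee m m m + d • ff m m m = d • ((c/d) • ee m m m + ff m m m) := by
    rw [smul_add, smul_smul, mul_comm d (c/d), div_mul_cancel₀ c hd]
  have h1 := hQ.1 (m-1) (by omega) le_rfl
  rw [show m - 1 + 1 = m by omega] at h1
  rw [e3, map_smul, h1]

lemma Q_agree (m : ℕ) (hm : 2 ≤ m) (hme : Even m) (c d : ℂ) (hd : d ≠ 0)
    (Q Q' : V m m →ₗ[ℂ] V (m-1) (m-1)) (hQ : QCondII2 m c d Q) (hQ' : QCondII2 m c d Q')
    (u : V m m) (hu : u ∈ orth m m (Submodule.span ℂ {c • ee m m 1 + d • ff m m 1})) :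
    Q u = Q' u := by
  have horth : orth m m (Submodule.span ℂ {c • ee m m 1 + d • ff m m 1})
      = Submodule.span ℂ
        (({v | ∃ i, 1 ≤ i ∧ i ≤ m-1 ∧ v = ee m m i} ∪ {v | ∃ j, 1 ≤ j ∧ j ≤ m-1 ∧ v = ff m m j})
          ∪ {c • ee m m m + d • ff m m m}) := by
    rw [orth_eq m hm hme c d hd, EF]; simp only [Submodule.span_union]
  rw [horth] at hu
  refine LinearMap.eqOn_span ?_ hu
  rintro v ((⟨i, hi1, hi2, rfl⟩ | ⟨j, hj1, hj2, rfl⟩) | rfl)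
  · rw [hQ.2.1 i hi1 hi2, hQ'.2.1 i hi1 hi2]
  · by_cases h : j = 1
    · subst h; rw [Q_ff1 m hm c d hd Q hQ, Q_ff1 m hm c d hd Q' hQ']
    · rw [Q_ffj m hm c d hd Q hQ j (by omega) hj2, Q_ffj m hm c d hd Q' hQ' j (by omega) hj2]
  · rw [Q_g m hm c d hd Q hQ, Q_g m hm c d hd Q' hQ']

lemma cL_zero (p q k : ℕ) : cL p q (0 : V p q) k = 0 := by unfold cL; split <;> rfl
lemma cR_zero (p q k : ℕ) : cR p q (0 : V p q) k = 0 := by unfold cR; split <;> rfl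

lemma Q0_ker (m : ℕ) (hm : 2 ≤ m) (c d : ℂ) (hd : d ≠ 0) (u : V m m)
    (hu : c * cR m m u (m-1) = d * cL m m u (m-1)) (h0 : Q0 m c d u = 0) :
    u ∈ Submodule.span ℂ {c • ee m m 1 + d • ff m m 1} := by
  have hcL0 : ∀ k, k < m-1 → cL m m u k = (c/d) * cR m m u k := by
    intro k hk
    have h := cL_Q0 m c d u k hk
    rw [h0, cL_zero] at h
    linear_combination -h
  have hcR1 : ∀ k, 1 ≤ k → k ≤ m-1 → cR m m u k = 0 := by
    intro k hk1 hk2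
    have h := cR_Q0 m c d u (k-1) (by omega)
    rw [h0, cR_zero, show k - 1 + 1 = k by omega] at h
    exact h.symm
  have hLlast : cL m m u (m-1) = 0 := by
    have h := hcR1 (m-1) (by omega) le_rfl
    rw [h, mul_zero] at hu
    have h2 := mul_eq_zero.mp hu.symm
    tauto
  rw [Submodule.mem_span_singleton]
  refine ⟨cR m m u 0 / d, (Vext _ _ _ _ ?_ ?_).symm⟩ <;> intro k
  · rw [cL_smul, cL_add, cL_smul, cL_smul, cL_ee, cL_ff]
    by_cases hk : k < m
    · by_cases h0' : k = 0
      · subst h0'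
        rw [if_pos ⟨rfl, by omega⟩, hcL0 0 (by omega)]
        field_simp; ring
      · rw [if_neg (by omega)]
        by_cases hk1 : k < m - 1
        · rw [hcL0 k hk1, hcR1 k (by omega) (by omega)]; ring
        · rw [show k = m-1 by omega, hLlast]; ring
    · rw [if_neg (by omega), cL_oor _ _ _ _ hk]; ring
  · rw [cR_smul, cR_add, cR_smul, cR_smul, cR_ee, cR_ff]
    by_cases hk : k < m
    · by_cases h0' : k = 0
      · subst h0'; rw [if_pos ⟨rfl, by omega⟩]; field_simp; ring
      · rw [if_neg (by omega), hcR1 k (by omega) (by omega)]; ring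
    · rw [if_neg (by omega), cR_oor _ _ _ _ hk]; ring

lemma Q0_surj (m : ℕ) (hm : 2 ≤ m) (c d : ℂ) (hd : d ≠ 0) (w : V (m-1) (m-1)) :
    ∃ u : V m m, (c * cR m m u (m-1) = d * cL m m u (m-1)) ∧ Q0 m c d u = w := by
  set G : ℕ → ℂ := fun k => if 1 ≤ k then cR (m-1) (m-1) w (k-1) else 0 with hG
  refine ⟨Sum.elim
    (fun i => cL (m-1) (m-1) w (i:ℕ) + (c/d) * G (i:ℕ))
    (fun i => G (i:ℕ)), ?_, ?_⟩
  · have h1 : cR m m (Sum.elim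
        (fun i : Fin m => cL (m-1) (m-1) w (i:ℕ) + (c/d) * G (i:ℕ))
        (fun i : Fin m => G (i:ℕ))) (m-1) = G (m-1) := by
      unfold cR; rw [dif_pos (by omega : m-1 < m)]; rfl
    have h2 : cL m m (Sum.elim
        (fun i : Fin m => cL (m-1) (m-1) w (i:ℕ) + (c/d) * G (i:ℕ))
        (fun i : Fin m => G (i:ℕ))) (m-1) = cL (m-1) (m-1) w (m-1) + (c/d) * G (m-1) := by
      unfold cL; rw [dif_pos (by omega : m-1 < m)]; rfl
    rw [h1, h2, cL_oor _ _ _ _ (by omega)]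
    field_simp
    ring
  · apply Vext <;> intro k <;> by_cases hk : k < m - 1
    · rw [cL_Q0 _ _ _ _ _ hk]
      have h1 : cL m m (Sum.elim
          (fun i : Fin m => cL (m-1) (m-1) w (i:ℕ) + (c/d) * G (i:ℕ))
          (fun i : Fin m => G (i:ℕ))) k = cL (m-1) (m-1) w k + (c/d) * G k := by
        unfold cL; rw [dif_pos (by omega : k < m)]; rfl
      have h2 : cR m m (Sum.elim
          (fun i : Fin m => cL (m-1) (m-1) w (i:ℕ) + (c/d) * G (i:ℕ))
          (fun i : Fin m => G (i:ℕ))) k = G k := by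
        unfold cR; rw [dif_pos (by omega : k < m)]; rfl
      rw [h1, h2]; ring
    · rw [cL_oor _ _ _ _ hk, cL_oor _ _ _ _ hk]
    · rw [cR_Q0 _ _ _ _ _ hk]
      have h2 : cR m m (Sum.elim
          (fun i : Fin m => cL (m-1) (m-1) w (i:ℕ) + (c/d) * G (i:ℕ))
          (fun i : Fin m => G (i:ℕ))) (k+1) = G (k+1) := by
        unfold cR; rw [dif_pos (by omega : k+1 < m)]; rfl
      rw [h2, hG]
      simp
    · rw [cR_oor _ _ _ _ hk, cR_oor _ _ _ _ hk]

lemma Q0_comm (m : ℕ) (hm : 2 ≤ m) (c d : ℂ) (hd : d ≠ 0) (u : V m m)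
    (hu : c * cR m m u (m-1) = d * cL m m u (m-1)) :
    Q0 m c d (xmap m m u) = xmap (m-1) (m-1) (Q0 m c d u) := by
  apply Vext <;> intro k <;> by_cases hk : k < m - 1
  · rw [cL_Q0 _ _ _ _ _ hk, cL_xmap, cL_xmap, cR_xmap, if_pos (by omega : k+1 < m),
      if_pos (by omega : k+1 < m)]
    by_cases h2 : k + 1 < m - 1
    · rw [if_pos h2, cL_Q0 _ _ _ _ _ h2]
    · rw [if_neg h2, show k + 1 = m - 1 by omega]
      field_simp
      linear_combination -hu
  · rw [cL_oor _ _ _ _ hk, cL_xmap, if_neg (by omega)]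
  · rw [cR_Q0 _ _ _ _ _ hk, cR_xmap, cR_xmap]
    by_cases h2 : k + 1 < m - 1
    · rw [if_pos (by omega : k + 1 + 1 < m), if_pos h2, cR_Q0 _ _ _ _ _ h2]
    · rw [if_neg (by omega : ¬(k + 1 + 1 < m)), if_neg h2]
  · rw [cR_oor _ _ _ _ hk, cR_xmap, if_neg (by omega)]

lemma refl_sum (n : ℕ) (hn : Odd n) (g h : ℕ → ℂ) :
    ∑ i ∈ Finset.range (n+1), (-1:ℂ)^i * (g i * h (n-i) + g (n-i) * h i) = 0 := by
  set f : ℕ → ℂ := fun i => (-1:ℂ)^i * (g i * h (n-i) + g (n-i) * h i) with hf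
  have hrefl := Finset.sum_range_reflect f (n+1)
  have key : ∀ i ∈ Finset.range (n+1), f (n + 1 - 1 - i) = - f i := by
    intro i hi
    have hi' := Finset.mem_range.1 hi
    have e0 : n + 1 - 1 - i = n - i := by omega
    have e1 : n - (n - i) = i := by omega
    have e2 : (-1:ℂ)^(n-i) = -(-1:ℂ)^i := by
      have h3 : (-1:ℂ)^(n-i) * (-1:ℂ)^i = -1 := by
        rw [← pow_add, show n-i+i = n by omega]
        exact hn.neg_one_pow
      have h5 : (-1:ℂ)^i * (-1:ℂ)^i = 1 := by
        rw [← pow_add]; exact Even.neg_one_pow ⟨i, rfl⟩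
      linear_combination ((-1:ℂ)^i) * h3 - ((-1:ℂ)^(n-i)) * h5
    rw [hf, e0]
    simp only
    rw [e1, e2]
    ring
  have hS : (∑ i ∈ Finset.range (n+1), f i) = - ∑ i ∈ Finset.range (n+1), f i := by
    conv_lhs => rw [← hrefl]
    rw [← Finset.sum_neg_distrib]
    exact Finset.sum_congr rfl key
  linear_combination (1/2 : ℂ) * hS

lemma beta_pres (m : ℕ) (hm : 2 ≤ m) (hme : Even m) (c d : ℂ) (hd : d ≠ 0) (u v : V m m)
    (hu : c * cR m m u (m-1) = d * cL m m u (m-1))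
    (hv : c * cR m m v (m-1) = d * cL m m v (m-1)) :
    beta (m-1) (m-1) (Q0 m c d u) (Q0 m c d v) = beta m m u v := by
  rw [beta_formula, beta_formula]
  set F : ℕ → ℂ := fun i =>
    (-1:ℂ)^i * (cL m m u i * cR m m v (m-1-i) + cR m m u (m-1-i) * cL m m v i) with hF
  set H : ℕ → ℂ := fun i =>
    (-1:ℂ)^i * (cR m m u i * cR m m v (m-1-i) + cR m m u (m-1-i) * cR m m v i) with hH
  have hm1 : m = (m-1) + 1 := by omega
  have hLHS : ∀ i ∈ Finset.range (m-1),
      (-1:ℂ)^i * (cL (m-1) (m-1) (Q0 m c d u) i * cR (m-1) (m-1) (Q0 m c d v) (m-1-1-i)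
        + cR (m-1) (m-1) (Q0 m c d u) (m-1-1-i) * cL (m-1) (m-1) (Q0 m c d v) i)
      = F i - (c/d) * H i := by
    intro i hi
    have hi' := Finset.mem_range.1 hi
    have hj : m-1-1-i < m-1 := by omega
    rw [cL_Q0 _ _ _ _ _ hi', cL_Q0 _ _ _ _ _ hi', cR_Q0 _ _ _ _ _ hj, cR_Q0 _ _ _ _ _ hj,
      show m-1-1-i+1 = m-1-i by omega]
    simp only [hF, hH]
    ring
  rw [Finset.sum_congr rfl hLHS]
  have hR : ∑ i ∈ Finset.range m, F i = ∑ i ∈ Finset.range (m-1), F i + F (m-1) := by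
    conv_lhs => rw [hm1]
    rw [Finset.sum_range_succ]
  have hH0 : ∑ i ∈ Finset.range m, H i = 0 := by
    have hodd : Odd (m-1) := by
      rcases hme with ⟨t, rfl⟩; exact ⟨t-1, by omega⟩
    have := refl_sum (m-1) hodd (fun i => cR m m u i) (fun i => cR m m v i)
    rw [hm1]
    exact this
  have hHsplit : ∑ i ∈ Finset.range (m-1), H i = - H (m-1) := by
    have h2 : ∑ i ∈ Finset.range m, H i = ∑ i ∈ Finset.range (m-1), H i + H (m-1) := by
      conv_lhs => rw [hm1]
      rw [Finset.sum_range_succ]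
    rw [h2] at hH0
    linear_combination hH0
  rw [Finset.sum_sub_distrib, ← Finset.mul_sum, hR, hHsplit]
  have e0 : m - 1 - (m-1) = 0 := by omega
  have hFm : F (m-1) = -(cL m m u (m-1) * cR m m v 0 + cR m m u 0 * cL m m v (m-1)) := by
    simp only [hF, e0, neg_one_pow_pred m hm hme]
    ring
  have hHm : H (m-1) = -(cR m m u (m-1) * cR m m v 0 + cR m m u 0 * cR m m v (m-1)) := by
    simp only [hH, e0, neg_one_pow_pred m hm hme]
    ring
  rw [hFm, hHm]
  have hu' : cL m m u (m-1) = c * cR m m u (m-1) / d := by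
    rw [eq_div_iff hd]; linear_combination -hu
  have hv' : cL m m v (m-1) = c * cR m m v (m-1) / d := by
    rw [eq_div_iff hd]; linear_combination -hv
  rw [hu', hv']
  field_simp
  ring

/-- Lemma 3.3(b), case `Q^II_2`.  For `λ = (m,m)` with `m ≥ 2` even,
`d ≠ 0`, and `W = ⟨c·e_1 + d·f_1⟩`: `W` is isotropic,
`W^⊥ = ⟨e_1, …, e_{m-1}, f_1, …, f_{m-1}, c·e_m + d·f_m⟩`, `W` and `W^⊥` are
`x_λ`-invariant, and the map `Q : W^⊥/W → V_(m-1,m-1)` determined by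
`Q(((c/d)e_{j+1} + f_{j+1})+W) = f_j`, `Q(e_j+W) = e_j` is an isomorphism of
quadratic spaces satisfying `Q ∘ x̄_λ = x_ν ∘ Q`. -/
theorem statement4 (m : ℕ) (hm : 2 ≤ m) (hme : Even m) (c d : ℂ) (hd : d ≠ 0) :
    Submodule.span ℂ {c • ee m m 1 + d • ff m m 1} ≤
      orth m m (Submodule.span ℂ {c • ee m m 1 + d • ff m m 1}) ∧
    orth m m (Submodule.span ℂ {c • ee m m 1 + d • ff m m 1}) =
      EF m m (m-1) (m-1) ⊔ Submodule.span ℂ {c • ee m m m + d • ff m m m} ∧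
    (Submodule.span ℂ {c • ee m m 1 + d • ff m m 1}).map (xmap m m) ≤
      Submodule.span ℂ {c • ee m m 1 + d • ff m m 1} ∧
    (orth m m (Submodule.span ℂ {c • ee m m 1 + d • ff m m 1})).map (xmap m m) ≤
      orth m m (Submodule.span ℂ {c • ee m m 1 + d • ff m m 1}) ∧
    (∃ Q : V m m →ₗ[ℂ] V (m-1) (m-1), QCondII2 m c d Q) ∧
    (∀ Q : V m m →ₗ[ℂ] V (m-1) (m-1), QCondII2 m c d Q →
      (∀ u ∈ orth m m (Submodule.span ℂ {c • ee m m 1 + d • ff m m 1}),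
        Q u = 0 → u ∈ Submodule.span ℂ {c • ee m m 1 + d • ff m m 1}) ∧
      (∀ w : V (m-1) (m-1),
        ∃ u ∈ orth m m (Submodule.span ℂ {c • ee m m 1 + d • ff m m 1}), Q u = w) ∧
      (∀ u ∈ orth m m (Submodule.span ℂ {c • ee m m 1 + d • ff m m 1}),
        ∀ v ∈ orth m m (Submodule.span ℂ {c • ee m m 1 + d • ff m m 1}),
        beta (m-1) (m-1) (Q u) (Q v) = beta m m u v) ∧
      (∀ u ∈ orth m m (Submodule.span ℂ {c • ee m m 1 + d • ff m m 1}),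
        Q (xmap m m u) = xmap (m-1) (m-1) (Q u))) := by
  refine ⟨W_le_orth m hm hme c d, orth_eq m hm hme c d hd, mapW_le m c d,
    mapOrth_le m hm hme c d, ⟨Q0 m c d, Q0_cond m hm c d hd⟩, ?_⟩
  intro Q hQ
  have hag : ∀ u ∈ orth m m (Submodule.span ℂ {c • ee m m 1 + d • ff m m 1}),
      Q u = Q0 m c d u :=
    fun u hu => Q_agree m hm hme c d hd Q (Q0 m c d) hQ (Q0_cond m hm c d hd) u hu
  refine ⟨?_, ?_, ?_, ?_⟩
  · intro u hu h0
    exact Q0_ker m hm c d hd u ((mem_orth_iff m hm hme c d u).1 hu)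
      (by rw [← hag u hu]; exact h0)
  · intro w
    obtain ⟨u, hor, hQu⟩ := Q0_surj m hm c d hd w
    have hu' := (mem_orth_iff m hm hme c d u).2 hor
    exact ⟨u, hu', by rw [hag u hu']; exact hQu⟩
  · intro u hu v hv
    rw [hag u hu, hag v hv]
    exact beta_pres m hm hme c d hd u v ((mem_orth_iff m hm hme c d u).1 hu)
      ((mem_orth_iff m hm hme c d v).1 hv)
  · intro u hu
    have hxu : xmap m m u ∈ orth m m (Submodule.span ℂ {c • ee m m 1 + d • ff m m 1}) :=
      mapOrth_le m hm hme c d (Submodule.mem_map_of_mem hu)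
    rw [hag _ hxu, hag u hu]
    exact Q0_comm m hm c d hd u ((mem_orth_iff m hm hme c d u).1 hu)
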